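/- arXiv:1903.02447 — 3 statements merged into one kernel-verified Lean document; each statement's English description precedes it below -/
import Mathlib

section
/- Let M be a median algebra with median operation m, and define the interval I(a,b) = {x ∈ M : m(a,x,b) = x}. Then for all u, v, x ∈ M and every y ∈ I(u,v), the point m(u,v,x) lies in I(x,y). (In other words, x ↦ m(u,v,x) is a gate projection onto the interval I(u,v).) -/
/-!
For a fixed base point `c`, the operation `(a, b) ↦ m c a b` is commutative, associative and
idempotent, i.e. a semilattice operation, and `I(c, b)` is the set of points below `b`.
Writing `p = m u v x`, the identity `m x p y = p` follows by moving between the base points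
`x`, `u`, `v` and `p` with associativity and left commutativity, inserting `y = m u v y` twice.
-/

structure IsMedianOp {M : Type*} (m : M → M → M → M) : Prop where
  majority : ∀ a b, m a a b = a
  swap₁₂ : ∀ a b c, m a b c = m b a c
  swap₂₃ : ∀ a b c, m a b c = m a c b
  assoc : ∀ a b c d, m (m a b c) d c = m a (m b d c) c

def medianInterval {M : Type*} (m : M → M → M → M) (a b : M) : Set M :=
  {x | m a x b = x}

namespace IsMedianOp

variable {M : Type*} {m : M → M → M → M}

theorem assoc_base (hm : IsMedianOp m) (a b c d : M) :
    m a (m a b c) d = m a b (m a c d) := by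
  simpa only [hm.swap₁₂, hm.swap₂₃] using hm.assoc b c a d

theorem left_comm (hm : IsMedianOp m) (a b c d : M) :
    m a b (m a c d) = m a c (m a b d) := by
  rw [← hm.assoc_base, ← hm.assoc_base, hm.swap₂₃ a b c]

theorem median_self_right (hm : IsMedianOp m) (a b : M) : m a b b = b := by
  rw [hm.swap₁₂, hm.swap₂₃, hm.majority]

theorem median_median_self (hm : IsMedianOp m) (a b c : M) :
    m a b (m a b c) = m a b c := by
  rw [← hm.assoc_base, hm.median_self_right]

theorem median_mem_medianInterval (hm : IsMedianOp m) {u v y : M}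
    (hy : y ∈ medianInterval m u v) (x : M) : m u v x ∈ medianInterval m x y := by
  have hy' : m u v y = y := by rw [hm.swap₂₃]; exact hy
  have hy_absorb : m u x y = m u y (m u v x) := by
    calc m u x y = m u x (m u y v) := by rw [hm.swap₂₃ u y v, hy']
      _ = m u y (m u x v) := hm.left_comm u x y v
      _ = m u y (m u v x) := by rw [hm.swap₂₃ u x v]
  set p := m u v x
  have hrotate : m p v (m p u y) = m p y (m p u v) := by
    rw [hm.left_comm, hm.swap₂₃ p v y, hm.left_comm]
  show m x p y = p
  calc m x p y = m x v (m x u y) := by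
        simpa only [hm.swap₁₂, hm.swap₂₃] using hm.assoc_base x v u y
    _ = m x v (m u v (m u x y)) := by rw [← hm.left_comm u x v y, hy', hm.swap₁₂ u x]
    _ = m v p (m u x y) := by
        simpa only [hm.swap₁₂, hm.swap₂₃] using (hm.assoc_base v x u (m u x y)).symm
    _ = m v p (m u y p) := by rw [hy_absorb]
    _ = m y p (m u v p) := by simpa only [hm.swap₁₂, hm.swap₂₃] using hrotate
    _ = p := by rw [hm.median_median_self]; exact hm.median_self_right y p

end IsMedianOp

theorem median_gate_projection {M : Type*} (m : M → M → M → M)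
    (habs : ∀ a b : M, m a a b = a)
    (hsym₁ : ∀ a b c : M, m a b c = m b a c)
    (hsym₂ : ∀ a b c : M, m a b c = m a c b)
    (hassoc : ∀ a b c d : M, m (m a b c) d c = m a (m b d c) c)
    (I : M → M → Set M)
    (hI : ∀ a b : M, I a b = {x : M | m a x b = x}) :
    ∀ u v x y : M, y ∈ I u v → m u v x ∈ I x y := by
  have hm : IsMedianOp m := ⟨habs, hsym₁, hsym₂, hassoc⟩
  obtain rfl : I = medianInterval m := funext₂ hI
  intro u v x y hy
  exact hm.median_mem_medianInterval hy x
end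

section
/- Let M be a median algebra with intervals I(a,b) = {x : m(a,x,b) = x}. Let x, y, z ∈ M and set p = m(x,y,z). Assume the 'opposite' condition I(x,y) ⊆ I(x,p) ∪ I(p,y). Then for every w ∈ M, either m(x, p, w) = p or m(y, p, w) = p; equivalently, p ∈ I(x,w) or p ∈ I(y,w). -/
/-!
Write `q = m(x,w,y)` and `r = m(p,w,y)`. Since `q ∈ I(x,y)`, the opposite condition puts `q` in
`I(x,p)` or in `I(p,y)`; by the symmetry `x ↔ y` it suffices to treat `q ∈ I(x,p)` and show
`p ∈ I(y,w)`, i.e. `r = p`. Associativity rewrites `m(q,p,y)` as `r`, then `q ∈ I(x,p)` gives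
`r ∈ I(x,p)`, while `r = m(w,y,p)` and `m(y,x,p) = p` give `m(x,r,p) = p`.
-/

structure IsMedianOperation {M : Type*} (m : M → M → M → M) : Prop where
  idem : ∀ a b, m a a b = a
  comm₁₂ : ∀ a b c, m a b c = m b a c
  comm₂₃ : ∀ a b c, m a b c = m a c b
  assoc : ∀ a b c d, m (m a b c) d c = m a (m b d c) c

namespace IsMedianOperation

variable {M : Type*} {m : M → M → M → M}

def Between (m : M → M → M → M) (a x b : M) : Prop := m a x b = x

theorem comm₁₃ (hm : IsMedianOperation m) (a b c : M) : m a b c = m c b a := by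
  rw [hm.comm₁₂, hm.comm₂₃, hm.comm₁₂]

theorem between_median (hm : IsMedianOperation m) (a b c : M) : Between m a (m a b c) c := by
  have h := hm.assoc a a c b
  rwa [hm.idem, eq_comm] at h

theorem between_symm (hm : IsMedianOperation m) {a x b : M} (h : Between m a x b) :
    Between m b x a := by
  rwa [Between, hm.comm₁₃] at h

theorem between_of_between_median (hm : IsMedianOperation m) {x y p w : M}
    (hp : Between m x p y) (hq : Between m x (m x w y) p) : Between m y p w := by
  have hqpy : m (m x w y) p y = m p w y := by
    calc m (m x w y) p y = m x (m p w y) y := by rw [hm.assoc, hm.comm₁₂ w]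
      _ = m p w y := by rw [← hm.assoc, hp]
  have hr_between : m x (m p w y) p = m p w y := by
    calc m x (m p w y) p = m x (m (m x w y) y p) p := by rw [hm.comm₂₃ (m x w y), hqpy]
      _ = m p w y := by rw [← hm.assoc, hq, hm.comm₂₃, hqpy]
  have hr_eq : m x (m p w y) p = p := by
    have hyxp : m y x p = p := by rw [hm.comm₁₂, hm.comm₂₃, hp]
    calc m x (m p w y) p = m (m w y p) x p := by rw [hm.comm₁₂ x, hm.comm₁₂ p, hm.comm₂₃ w]
      _ = p := by rw [hm.assoc, hyxp, hm.comm₁₃, hm.idem]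
  calc m y p w = m p w y := by rw [hm.comm₁₂, hm.comm₂₃]
    _ = p := hr_between.symm.trans hr_eq

end IsMedianOperation

open IsMedianOperation in
theorem opposite_points_median {M : Type*} (m : M → M → M → M)
    (habs : ∀ a b : M, m a a b = a)
    (hsym₁ : ∀ a b c : M, m a b c = m b a c)
    (hsym₂ : ∀ a b c : M, m a b c = m a c b)
    (hassoc : ∀ a b c d : M, m (m a b c) d c = m a (m b d c) c)
    (I : M → M → Set M)
    (hI : ∀ a b : M, I a b = {x : M | m a x b = x})
    (x y z p : M) (hp : p = m x y z)
    (hop : I x y ⊆ I x p ∪ I p y) :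
    ∀ w : M, p ∈ I x w ∨ p ∈ I y w := by
  have hm : IsMedianOperation m := ⟨habs, hsym₁, hsym₂, hassoc⟩
  have hpxy : Between m x p y := by
    rw [hp, hsym₂]; exact hm.between_median x z y
  simp only [hI, Set.subset_def, Set.mem_union, Set.mem_ofPred_eq] at hop ⊢
  intro w
  rcases hop _ (hm.between_median x w y) with hqxp | hqpy
  · exact Or.inr (hm.between_of_between_median hpxy hqxp)
  · rw [hm.comm₁₃ x] at hqpy
    exact Or.inl <|
      hm.between_of_between_median (hm.between_symm hpxy) (hm.between_symm hqpy)
end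

section
/- Let g be a bijection of a set X and let S ⊆ X be a finite subset. Then there exists an integer n ≥ 1 such that for every s ∈ S with gⁿ(s) ∈ S, one has gⁿ(s) = s. Equivalently, every element of S ∩ gⁿ(S) is fixed by gⁿ. -/
/-!
A point of `S` is either periodic under `g` or has an injective orbit. Periodic points are fixed
by every multiple `n` of their minimal periods, while a non-periodic point, its orbit being
injective, returns to the finite set `S` only finitely often. A large enough common multiple `n`
of the minimal periods of the periodic points of `S` therefore works.
-/

open Filter Function

namespace Function

variable {α : Type*} {f : α → α} {x : α}

theorem Injective.iterate_apply_injective_of_notMem_periodicPts (hf : Injective f)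
    (hx : x ∉ periodicPts f) : Injective (f^[·] x) := by
  intro m n hmn
  have eq_zero_of_fixed : ∀ {k : ℕ}, f^[k] x = x → k = 0 := fun hk =>
    Nat.eq_zero_of_not_pos fun hpos => hx (mk_mem_periodicPts hpos hk)
  have := eq_zero_of_fixed (iterate_cancel hf hmn)
  have := eq_zero_of_fixed (iterate_cancel hf hmn.symm)
  omega

theorem Injective.eventually_iterate_notMem_of_notMem_periodicPts (hf : Injective f)
    (hx : x ∉ periodicPts f) {s : Set α} (hs : s.Finite) : ∀ᶠ n in atTop, f^[n] x ∉ s := by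
  rw [← Nat.cofinite_eq_atTop]
  exact (hs.preimage (hf.iterate_apply_injective_of_notMem_periodicPts hx).injOn)
    |>.eventually_cofinite_notMem

end Function

theorem exists_power_fixing_finite_intersection {X : Type*} (g : X ≃ X) (S : Finset X) :
    ∃ n : ℕ, 1 ≤ n ∧ ∀ s ∈ S, (⇑g)^[n] s ∈ S → (⇑g)^[n] s = s := by
  classical
  set P := S.filter (· ∈ periodicPts g)
  set d := ∏ s ∈ P, minimalPeriod g s
  have hd : 0 < d := Finset.prod_pos fun s hs =>
    minimalPeriod_pos_of_mem_periodicPts (Finset.mem_filter.mp hs).2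
  have fixed_of_periodic : ∀ s ∈ P, ∀ k, (⇑g)^[d * k] s = s := fun s hs k =>
    isPeriodicPt_iff_minimalPeriod_dvd.mpr <|
      (Finset.dvd_prod_of_mem _ hs).mul_right k
  have escape : ∀ᶠ n in atTop, ∀ s ∈ S.filter (· ∉ periodicPts g), (⇑g)^[n] s ∉ S :=
    (eventually_all_finset _).mpr fun s hs =>
      g.injective.eventually_iterate_notMem_of_notMem_periodicPts
        (Finset.mem_filter.mp hs).2 S.finite_toSet
  obtain ⟨k, hk, hescape⟩ :=
    ((eventually_ge_atTop 1).and ((tendsto_id.const_mul_atTop' hd).eventually escape)).exists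
  refine ⟨d * k, Nat.one_le_iff_ne_zero.mpr (by positivity), fun s hs hgs => ?_⟩
  by_cases hper : s ∈ periodicPts g
  · exact fixed_of_periodic s (Finset.mem_filter.mpr ⟨hs, hper⟩) k
  · exact absurd hgs (hescape s (Finset.mem_filter.mpr ⟨hs, hper⟩))
end
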